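/- For every natural number n ≥ 3, the friendship graph F_n is not D-unique: the graphs F_n and (K_n ∘ K₁) + K₁ are not isomorphic but have the same domination polynomial, D(F_n, x) = D((K_n ∘ K₁) + K₁, x). -/

import Mathlib

open Polynomial

variable {V W : Type*}

/-- `S` is a dominating set of `G`. -/
def Dominates (G : SimpleGraph V) (S : Finset V) : Prop :=
  ∀ v, v ∉ S → ∃ u ∈ S, G.Adj u v

open Classical in
/-- The domination polynomial of a finite simple graph. -/
noncomputable def domPoly [Fintype V] (G : SimpleGraph V) : Polynomial ℤ :=
  ∑ S : Finset V, if Dominates G S then (X : Polynomial ℤ) ^ S.card else 0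

/-- The join of two graphs on disjoint vertex sets. -/
def graphJoin (G : SimpleGraph V) (H : SimpleGraph W) : SimpleGraph (V ⊕ W) where
  Adj x y :=
    match x, y with
    | Sum.inl a, Sum.inl b => G.Adj a b
    | Sum.inr a, Sum.inr b => H.Adj a b
    | _, _ => True
  symm.symm := by
    rintro (a | a) (b | b) h
    · exact G.adj_symm h
    · trivial
    · trivial
    · exact H.adj_symm h
  loopless.irrefl := by
    rintro (a | a) h
    · exact G.irrefl h
    · exact H.irrefl h

/-- The corona `G ∘ H`. -/
def corona (G : SimpleGraph V) (H : SimpleGraph W) : SimpleGraph (V ⊕ V × W) where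
  Adj x y :=
    match x, y with
    | Sum.inl a, Sum.inl b => G.Adj a b
    | Sum.inl a, Sum.inr (b, _) => a = b
    | Sum.inr (b, _), Sum.inl a => a = b
    | Sum.inr (a, w), Sum.inr (b, w') => a = b ∧ H.Adj w w'
  symm.symm := by
    rintro (a | ⟨a, w⟩) (b | ⟨b, w'⟩) h
    · exact G.adj_symm h
    · exact h
    · exact h
    · exact ⟨h.1.symm, H.adj_symm h.2⟩
  loopless.irrefl := by
    rintro (a | ⟨a, w⟩) h
    · exact G.irrefl h
    · exact H.irrefl h.2

/-- `n` disjoint copies of `K₂`. -/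
def nK2 (n : ℕ) : SimpleGraph (Fin n × Fin 2) where
  Adj x y := x.1 = y.1 ∧ x.2 ≠ y.2
  symm.symm := by rintro ⟨i, a⟩ ⟨j, b⟩ ⟨h1, h2⟩; exact ⟨h1.symm, h2.symm⟩
  loopless.irrefl := by rintro ⟨i, a⟩ ⟨_, h⟩; exact h rfl

/-- The friendship graph `F_n = K₁ + nK₂`. -/
def friendship (n : ℕ) : SimpleGraph (Fin 1 ⊕ Fin n × Fin 2) :=
  graphJoin (⊤ : SimpleGraph (Fin 1)) (nK2 n)

/-!
`F_n` is properly 3-coloured by giving the apex its own colour and 2-colouring each `K₂`, so it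
has no `K₄`; but the apex of `(K_n ∘ K₁) + K₁` together with three vertices of `K_n` is a `K₄`.

For the polynomials, send the apex to the apex and the `i`-th `K₂` of `F_n` onto the `i`-th
pendant edge of the corona. This turns `F_n` into a spanning subgraph of `(K_n ∘ K₁) + K₁`,
the missing edges being those of `K_n`. A set `S` dominates a graph iff it meets every closed
neighbourhood, so only the inclusion-minimal closed neighbourhoods matter; in both graphs these
are the `n` triangles formed by the apex and one `K₂` (for the corona: the closed neighbourhood
of a pendant vertex).
-/

namespace SimpleGraph

variable {G : SimpleGraph V} {H : SimpleGraph W}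

def closedNeighborSet (G : SimpleGraph V) (v : V) : Set V := insert v (G.neighborSet v)

theorem mem_closedNeighborSet {v u : V} : u ∈ G.closedNeighborSet v ↔ u = v ∨ G.Adj v u :=
  Iff.rfl

theorem closedNeighborSet_subset_preimage_of_le_comap {f : V → W} (hGH : G ≤ H.comap f)
    (v : V) : G.closedNeighborSet v ⊆ f ⁻¹' H.closedNeighborSet (f v) := by
  rintro u (rfl | hvu)
  · exact Or.inl rfl
  · exact Or.inr (hGH hvu)

def Coloring.graphJoin {α β : Type*} (cG : G.Coloring α) (cH : H.Coloring β) :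
    (graphJoin G H).Coloring (α ⊕ β) :=
  Coloring.mk (Sum.map cG cH) fun {x y} hxy => by
    rcases x with a | a <;> rcases y with b | b
    · exact fun h => cG.valid hxy (Sum.inl_injective h)
    · exact Sum.inl_ne_inr
    · exact Sum.inr_ne_inl
    · exact fun h => cH.valid hxy (Sum.inr_injective h)

theorem not_cliqueFree_graphJoin {a b : ℕ} (hG : ¬G.CliqueFree a) (hH : ¬H.CliqueFree b) :
    ¬(graphJoin G H).CliqueFree (a + b) := by
  simp only [CliqueFree, not_forall, not_not] at hG hH ⊢
  obtain ⟨s, hs⟩ := hG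
  obtain ⟨t, ht⟩ := hH
  refine ⟨s.disjSum t, ?_, by rw [Finset.card_disjSum, hs.card_eq, ht.card_eq]⟩
  rintro (x | x) hx (y | y) hy hxy
  · exact hs.isClique (Finset.inl_mem_disjSum.1 hx) (Finset.inl_mem_disjSum.1 hy)
      (fun h => hxy (congrArg _ h))
  · trivial
  · trivial
  · exact ht.isClique (Finset.inr_mem_disjSum.1 hx) (Finset.inr_mem_disjSum.1 hy)
      (fun h => hxy (congrArg _ h))

theorem not_cliqueFree_corona {k : ℕ} (hG : ¬G.CliqueFree k) : ¬(corona G H).CliqueFree k :=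
  fun h => hG (h.comap (Embedding.isContained ⟨Function.Embedding.inl, Iff.rfl⟩))

end SimpleGraph

open SimpleGraph

section Domination

variable {G : SimpleGraph V} {H : SimpleGraph W}

theorem dominates_iff_forall_exists_mem_closedNeighborSet {S : Finset V} :
    Dominates G S ↔ ∀ v, ∃ u ∈ S, u ∈ G.closedNeighborSet v := by
  refine ⟨fun h v => ?_, fun h v hv => ?_⟩
  · by_cases hv : v ∈ S
    · exact ⟨v, hv, Or.inl rfl⟩
    · obtain ⟨u, hu, huv⟩ := h v hv
      exact ⟨u, hu, Or.inr huv.symm⟩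
  · obtain ⟨u, hu, rfl | hvu⟩ := h v
    · exact absurd hu hv
    · exact ⟨u, hu, hvu.symm⟩

theorem Dominates.map_equiv (e : V ≃ W)
    (he : ∀ w, ∃ v, G.closedNeighborSet v ⊆ e ⁻¹' H.closedNeighborSet w) {S : Finset V}
    (hS : Dominates G S) : Dominates H (S.map e.toEmbedding) := by
  rw [dominates_iff_forall_exists_mem_closedNeighborSet] at hS ⊢
  intro w
  obtain ⟨v, hv⟩ := he w
  obtain ⟨u, hu, huv⟩ := hS v
  exact ⟨e u, Finset.mem_map_equiv.2 (by simpa using hu), hv huv⟩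

theorem domPoly_eq_of_equiv [Fintype V] [Fintype W] (e : V ≃ W)
    (he : ∀ S, Dominates G S ↔ Dominates H (S.map e.toEmbedding)) : domPoly G = domPoly H := by
  classical
  refine Fintype.sum_equiv (Equiv.finsetCongr e) _ _ fun S => ?_
  simp only [Equiv.finsetCongr_apply, Finset.card_map]
  exact if_congr (he S) rfl rfl

theorem domPoly_eq_of_le_comap [Fintype V] [Fintype W] (e : V ≃ W) (hGH : G ≤ H.comap e)
    (hHG : ∀ v, ∃ w, H.closedNeighborSet w ⊆ e.symm ⁻¹' G.closedNeighborSet v) :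
    domPoly G = domPoly H := by
  have hGH' (w : W) : ∃ v, G.closedNeighborSet v ⊆ e ⁻¹' H.closedNeighborSet w :=
    ⟨e.symm w, by simpa using closedNeighborSet_subset_preimage_of_le_comap hGH (e.symm w)⟩
  refine domPoly_eq_of_equiv e fun S => ⟨Dominates.map_equiv e hGH', fun hS => ?_⟩
  simpa [Finset.map_map] using hS.map_equiv e.symm hHG

end Domination

section Friendship

variable (n : ℕ)

abbrev coronaJoin : SimpleGraph ((Fin n ⊕ Fin n × Fin 1) ⊕ Fin 1) :=
  graphJoin (corona (⊤ : SimpleGraph (Fin n)) (⊤ : SimpleGraph (Fin 1))) (⊤ : SimpleGraph (Fin 1))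

theorem cliqueFree_friendship : (friendship n).CliqueFree 4 := by
  let c : (nK2 n).Coloring (Fin 2) := Coloring.mk Prod.snd fun h => h.2
  exact ((selfColoring _).graphJoin c).colorable.cliqueFree (by simp)

theorem not_cliqueFree_coronaJoin (hn : 3 ≤ n) : ¬(coronaJoin n).CliqueFree 4 :=
  not_cliqueFree_graphJoin (a := 3) (b := 1)
    (not_cliqueFree_corona (IsContained.not_cliqueFree
      (Embedding.completeGraph (Fin.castLEEmb hn)).isContained))
    (IsContained.not_cliqueFree IsContained.rfl)

def friendshipEquiv : (Fin 1 ⊕ Fin n × Fin 2) ≃ ((Fin n ⊕ Fin n × Fin 1) ⊕ Fin 1) where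
  toFun
    | Sum.inl _ => Sum.inr 0
    | Sum.inr (i, b) => if b = 0 then Sum.inl (Sum.inl i) else Sum.inl (Sum.inr (i, 0))
  invFun
    | Sum.inr _ => Sum.inl 0
    | Sum.inl (Sum.inl i) => Sum.inr (i, 0)
    | Sum.inl (Sum.inr (i, _)) => Sum.inr (i, 1)
  left_inv := by
    rintro (a | ⟨i, b⟩)
    · simp [Subsingleton.elim a 0]
    · fin_cases b <;> simp
  right_inv := by
    rintro ((i | ⟨i, c⟩) | a)
    · simp
    · simp [Subsingleton.elim c 0]
    · simp [Subsingleton.elim a 0]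

theorem friendship_le_comap_friendshipEquiv :
    friendship n ≤ (coronaJoin n).comap (friendshipEquiv n) := by
  rintro (_ | ⟨i, b⟩) (_ | ⟨j, c⟩) h <;> (try fin_cases b) <;> (try fin_cases c) <;>
    simp_all [friendship, graphJoin, corona, nK2, friendshipEquiv, Fin.fin_one_eq_zero]

theorem exists_closedNeighborSet_coronaJoin_subset (v : Fin 1 ⊕ Fin n × Fin 2) :
    ∃ w, (coronaJoin n).closedNeighborSet w ⊆
      (friendshipEquiv n).symm ⁻¹' (friendship n).closedNeighborSet v := by
  rcases v with _ | ⟨i, b⟩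
  · refine ⟨Sum.inr 0, ?_⟩
    rintro ((j | ⟨j, c⟩) | _) hu <;>
      simp_all [mem_closedNeighborSet, friendship, graphJoin, corona, nK2, friendshipEquiv,
        Fin.fin_one_eq_zero]
  · refine ⟨Sum.inl (Sum.inr (i, 0)), ?_⟩
    rintro ((j | ⟨j, c⟩) | _) hu <;> fin_cases b <;>
      simp_all [mem_closedNeighborSet, friendship, graphJoin, corona, nK2, friendshipEquiv,
        Fin.fin_one_eq_zero]

theorem domPoly_friendship : domPoly (friendship n) = domPoly (coronaJoin n) :=
  domPoly_eq_of_le_comap (friendshipEquiv n) (friendship_le_comap_friendshipEquiv n)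
    (exists_closedNeighborSet_coronaJoin_subset n)

end Friendship

/-- For `n ≥ 3` the friendship graph is not `D`-unique: `F_n` and
`(K_n ∘ K₁) + K₁` are non-isomorphic graphs with equal domination polynomials. -/
theorem friendship_not_unique (n : ℕ) (hn : 3 ≤ n) :
    IsEmpty (friendship n ≃g
        graphJoin (corona (⊤ : SimpleGraph (Fin n)) (⊤ : SimpleGraph (Fin 1)))
          (⊤ : SimpleGraph (Fin 1))) ∧
      domPoly (friendship n) =
        domPoly (graphJoin (corona (⊤ : SimpleGraph (Fin n)) (⊤ : SimpleGraph (Fin 1)))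
          (⊤ : SimpleGraph (Fin 1))) := by
  refine ⟨⟨fun e => ?_⟩, domPoly_friendship n⟩
  exact not_cliqueFree_coronaJoin n hn ((cliqueFree_friendship n).comap e.isContained')
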